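/- arXiv:1906.07041 — 3 statements merged into one kernel-verified Lean document; each statement's English description precedes it below -/
import Mathlib

section
/- Let U ⊆ ℝ^{n×n} be a set of utility matrices each of which is a positive multiple of a permutation matrix (exact utility matrices). If C, C̄ ∈ ℝ^{n×n} are channels with uniform input distribution and C̄ is a Shannon-garbling of C, then C is more Blackwell-useful than C̄ with respect to U: for all U ∈ U, max over column-stochastic A of tr(U·A·C·Π) ≥ max over column-stochastic A of tr(U·A·C̄·Π). -/
/-!
For `U = α P_σ` the utility `tr (U A C Π)` is `(α / n) ∑ⱼ (A C)_{j, σ j}`. Writing the garbled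
channel as `M C N`, the sum `∑ⱼ (Ā M C N)_{j, σ j}` is a combination of entries `C r s` in which,
because `Ā M` and `N` are column-stochastic, row `r` of `C` carries total weight one; hence it is
at most `∑ᵣ maxₛ C r s`. The deterministic decoder sending output `r` to `σ⁻¹ (argmaxₛ C r s)`
attains this bound on `C` itself.
-/

open Matrix BigOperators

def ColStoch {m n : ℕ} (A : Matrix (Fin m) (Fin n) ℝ) : Prop :=
  (∀ i j, 0 ≤ A i j) ∧ ∀ j, ∑ i, A i j = 1

theorem ColStoch.mul {m n k : ℕ} {A : Matrix (Fin m) (Fin n) ℝ} {B : Matrix (Fin n) (Fin k) ℝ}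
    (hA : ColStoch A) (hB : ColStoch B) : ColStoch (A * B) := by
  refine ⟨fun i j => ?_, fun j => ?_⟩
  · rw [mul_apply]
    exact Finset.sum_nonneg fun l _ => mul_nonneg (hA.1 i l) (hB.1 l j)
  · simp only [mul_apply]
    rw [Finset.sum_comm]
    simp only [← Finset.sum_mul, hA.2, one_mul, hB.2]

def deterministicMatrix {m n : ℕ} (f : Fin n → Fin m) : Matrix (Fin m) (Fin n) ℝ :=
  of fun j r => if j = f r then 1 else 0

theorem colStoch_deterministicMatrix {m n : ℕ} (f : Fin n → Fin m) :
    ColStoch (deterministicMatrix f) :=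
  ⟨fun j r => by simp only [deterministicMatrix, of_apply]; split_ifs <;> norm_num,
    fun r => by simp [deterministicMatrix]⟩

theorem sum_deterministicMatrix_mul_apply {m n k : ℕ} (f : Fin n → Fin m)
    (C : Matrix (Fin n) (Fin k) ℝ) (τ : Fin m → Fin k) :
    ∑ j, (deterministicMatrix f * C) j (τ j) = ∑ r, C r (τ (f r)) := by
  simp only [mul_apply, deterministicMatrix, of_apply, ite_mul, one_mul, zero_mul]
  rw [Finset.sum_comm]
  simp

theorem trace_mul_of_eq_smul_perm {n : ℕ} {U : Matrix (Fin n) (Fin n) ℝ} {α : ℝ}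
    {σ : Equiv.Perm (Fin n)} (hU : ∀ i j, U i j = α * if i = σ j then 1 else 0)
    (X : Matrix (Fin n) (Fin n) ℝ) :
    (U * X).trace = α * ∑ j, X j (σ j) := by
  simp only [trace, diag, mul_apply, hU, mul_ite, mul_one, mul_zero, ite_mul, zero_mul]
  rw [Finset.sum_comm, Finset.mul_sum]
  simp

theorem sum_garbling_apply_le {p m k q : ℕ} {W : Matrix (Fin p) (Fin m) ℝ}
    {N : Matrix (Fin k) (Fin q) ℝ} (hW : ColStoch W) (hN : ColStoch N)
    {C : Matrix (Fin m) (Fin k) ℝ} {best : Fin m → Fin k} (hbest : ∀ r s, C r s ≤ C r (best r))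
    (τ : Fin p → Fin q) :
    ∑ j, (W * C * N) j (τ j) ≤ ∑ r, C r (best r) :=
  calc ∑ j, (W * C * N) j (τ j)
      = ∑ j, ∑ r, ∑ s, W j r * C r s * N s (τ j) := by
        simp only [mul_apply, Finset.sum_mul]
        exact Finset.sum_congr rfl fun j _ => Finset.sum_comm
    _ ≤ ∑ j, ∑ r, ∑ s, W j r * C r (best r) * N s (τ j) := by
        gcongr with j _ r _ s _
        · exact hN.1 s (τ j)
        · exact hW.1 j r
        · exact hbest r s
    _ = ∑ r, C r (best r) := by
        simp only [← Finset.mul_sum, hN.2, mul_one]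
        rw [Finset.sum_comm]
        simp only [← Finset.sum_mul, hW.2, one_mul]

theorem shannon_implies_blackwell_exact_general {n : ℕ}
    (𝒰 : Set (Matrix (Fin n) (Fin n) ℝ))
    (h𝒰 : ∀ U ∈ 𝒰, ∃ (α : ℝ) (σ : Equiv.Perm (Fin n)), 0 < α ∧
        ∀ i j, U i j = α * (if i = σ j then 1 else 0))
    (C Cbar : Matrix (Fin n) (Fin n) ℝ)
    (hS : ∃ M N : Matrix (Fin n) (Fin n) ℝ, ColStoch M ∧ ColStoch N ∧ Cbar = M * C * N) :
    ∀ U ∈ 𝒰, ∀ Abar : Matrix (Fin n) (Fin n) ℝ, ColStoch Abar →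
      ∃ A : Matrix (Fin n) (Fin n) ℝ, ColStoch A ∧
        (U * (A * C) * ((n : ℝ)⁻¹ • (1 : Matrix (Fin n) (Fin n) ℝ))).trace ≥
        (U * (Abar * Cbar) * ((n : ℝ)⁻¹ • (1 : Matrix (Fin n) (Fin n) ℝ))).trace := by
  intro U hU Abar hAbar
  obtain ⟨α, σ, hα, hUσ⟩ := h𝒰 U hU
  obtain ⟨M, N, hM, hN, rfl⟩ := hS
  choose best hbest using fun r : Fin n => @Finite.exists_max _ _ _ ⟨r⟩ _ (C r)
  refine ⟨deterministicMatrix (σ.symm ∘ best), colStoch_deterministicMatrix _, ?_⟩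
  rw [ge_iff_le, Matrix.mul_smul, Matrix.mul_smul, Matrix.mul_one, Matrix.mul_one, trace_smul,
    trace_smul, trace_mul_of_eq_smul_perm hUσ, trace_mul_of_eq_smul_perm hUσ,
    sum_deterministicMatrix_mul_apply, ← Matrix.mul_assoc, ← Matrix.mul_assoc]
  simp only [Function.comp_apply, Equiv.apply_symm_apply]
  have := sum_garbling_apply_le (hAbar.mul hM) hN hbest σ
  gcongr

/-- Sufficiency of the Shannon-order for reduced Blackwell-usefulness w.r.t.
a set of exact utility matrices. -/
theorem shannon_implies_blackwell_exact {n : ℕ}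
    (𝒰 : Set (Matrix (Fin n) (Fin n) ℝ))
    (h𝒰 : ∀ U ∈ 𝒰, ∃ (α : ℝ) (σ : Equiv.Perm (Fin n)), 0 < α ∧
        ∀ i j, U i j = α * (if i = σ j then 1 else 0))
    (C Cbar : Matrix (Fin n) (Fin n) ℝ) (hC : ColStoch C) (hCbar : ColStoch Cbar)
    (hS : ∃ M N : Matrix (Fin n) (Fin n) ℝ, ColStoch M ∧ ColStoch N ∧ Cbar = M * C * N) :
    ∀ U ∈ 𝒰, ∀ Abar : Matrix (Fin n) (Fin n) ℝ, ColStoch Abar →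
      ∃ A : Matrix (Fin n) (Fin n) ℝ, ColStoch A ∧
        (U * (A * C) * ((n : ℝ)⁻¹ • (1 : Matrix (Fin n) (Fin n) ℝ))).trace ≥
        (U * (Abar * Cbar) * ((n : ℝ)⁻¹ • (1 : Matrix (Fin n) (Fin n) ℝ))).trace :=
  shannon_implies_blackwell_exact_general 𝒰 h𝒰 C Cbar hS
end

section
/- For the channels C = [[0,0,1],[1/2,1/2,0],[1/2,1/2,0]] and C̄ = [[1,0,0],[0,1/2,1/2],[0,1/2,1/2]] with uniform input distribution Π = (1/3)·I and the doubly-stochastic utility matrix U = [[1,0,0],[0,1/2,1/2],[0,1/2,1/2]], the maximal expected utility over the policy space of C equals 1/2 while that over the policy space of C̄ equals 2/3; in particular, C is not more Blackwell-useful than C̄ with respect to the set of positive multiples of doubly-stochastic matrices, even though C̄ is a Shannon-garbling of C. -/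
/-!
The expected utility `tr (U A C Π) = 3⁻¹ · tr (A (C U))` is linear in the policy `A`, and every
column of `A` is a probability vector. Hence it is maximised by a deterministic policy that, on
output `k`, picks an action maximising row `k` of `C U`. The row maxima of `C U` sum to `3/2` and
those of `C̄ U` to `2`, giving `1/2` and `2/3`. Finally `C̄` is `C` with its columns permuted.
-/

open Matrix BigOperators

section

variable {m n p : ℕ}

def decisionMatrix (f : Fin n → Fin m) : Matrix (Fin m) (Fin n) ℝ :=
  Matrix.of fun j k => if f k = j then 1 else 0

theorem colStoch_decisionMatrix (f : Fin n → Fin m) : ColStoch (decisionMatrix f) := by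
  refine ⟨fun j k => ?_, fun k => ?_⟩
  · simp only [decisionMatrix, of_apply]; split_ifs <;> norm_num
  · simp [decisionMatrix]

theorem decisionMatrix_id : decisionMatrix (id : Fin n → Fin n) = 1 := by
  ext j k
  simp [decisionMatrix, one_apply, eq_comm]

theorem colStoch_one : ColStoch (1 : Matrix (Fin n) (Fin n) ℝ) :=
  decisionMatrix_id (n := n) ▸ colStoch_decisionMatrix id

theorem mul_decisionMatrix_apply (B : Matrix (Fin p) (Fin n) ℝ) (f : Fin m → Fin n)
    (i : Fin p) (k : Fin m) : (B * decisionMatrix f) i k = B i (f k) := by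
  simp [decisionMatrix, mul_apply]

theorem trace_decisionMatrix_mul (f : Fin n → Fin m) (B : Matrix (Fin n) (Fin m) ℝ) :
    (decisionMatrix f * B).trace = ∑ k, B k (f k) := by
  simp only [trace, diag, mul_apply, decisionMatrix, of_apply, ite_mul, one_mul, zero_mul]
  rw [Finset.sum_comm]
  simp

theorem ColStoch.trace_mul_le {A : Matrix (Fin m) (Fin n) ℝ} (hA : ColStoch A)
    {B : Matrix (Fin n) (Fin m) ℝ} {b : Fin n → ℝ} (hb : ∀ k j, B k j ≤ b k) :
    (A * B).trace ≤ ∑ k, b k := by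
  rw [trace_mul_comm]
  refine Finset.sum_le_sum fun k _ => ?_
  calc (B * A) k k = ∑ j, A j k * B k j := by simp only [mul_apply, mul_comm]
    _ ≤ ∑ j, A j k * b k :=
        Finset.sum_le_sum fun j _ => mul_le_mul_of_nonneg_left (hb k j) (hA.1 j k)
    _ = b k := by rw [← Finset.sum_mul, hA.2 k, one_mul]

theorem isGreatest_trace_colStoch_mul (B : Matrix (Fin n) (Fin m) ℝ) (f : Fin n → Fin m)
    (hf : ∀ k j, B k j ≤ B k (f k)) :
    IsGreatest {x | ∃ A : Matrix (Fin m) (Fin n) ℝ, ColStoch A ∧ x = (A * B).trace}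
      (∑ k, B k (f k)) :=
  ⟨⟨decisionMatrix f, colStoch_decisionMatrix f, (trace_decisionMatrix_mul f B).symm⟩,
    by rintro x ⟨A, hA, rfl⟩; exact hA.trace_mul_le hf⟩

theorem trace_mul_mul_smul_one (U : Matrix (Fin p) (Fin m) ℝ) (A : Matrix (Fin m) (Fin n) ℝ)
    (C : Matrix (Fin n) (Fin p) ℝ) (c : ℝ) :
    (U * (A * C) * (c • 1)).trace = c * (A * (C * U)).trace := by
  rw [mul_smul_comm, mul_one, trace_smul, trace_mul_comm, Matrix.mul_assoc, smul_eq_mul]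

theorem isGreatest_expectedUtility (U : Matrix (Fin p) (Fin m) ℝ) (C : Matrix (Fin n) (Fin p) ℝ)
    {c : ℝ} (hc : 0 ≤ c) (f : Fin n → Fin m) (hf : ∀ k j, (C * U) k j ≤ (C * U) k (f k)) :
    IsGreatest {x | ∃ A : Matrix (Fin m) (Fin n) ℝ, ColStoch A ∧ x = (U * (A * C) * (c • 1)).trace}
      (c * ∑ k, (C * U) k (f k)) := by
  simp_rw [trace_mul_mul_smul_one]
  have h := isGreatest_trace_colStoch_mul (C * U) f hf
  refine ⟨?_, ?_⟩
  · obtain ⟨A, hA, hx⟩ := h.1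
    exact ⟨A, hA, by rw [← hx]⟩
  · rintro x ⟨A, hA, rfl⟩
    exact mul_le_mul_of_nonneg_left (h.2 ⟨A, hA, rfl⟩) hc

end

theorem failure_doubly_stochastic :
    let C : Matrix (Fin 3) (Fin 3) ℝ := !![0, 0, 1; 1/2, 1/2, 0; 1/2, 1/2, 0]
    let Cbar : Matrix (Fin 3) (Fin 3) ℝ := !![1, 0, 0; 0, 1/2, 1/2; 0, 1/2, 1/2]
    let Pi : Matrix (Fin 3) (Fin 3) ℝ := (3 : ℝ)⁻¹ • (1 : Matrix (Fin 3) (Fin 3) ℝ)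
    let U : Matrix (Fin 3) (Fin 3) ℝ := !![1, 0, 0; 0, 1/2, 1/2; 0, 1/2, 1/2]
    (∃ M N : Matrix (Fin 3) (Fin 3) ℝ, ColStoch M ∧ ColStoch N ∧ Cbar = M * C * N) ∧
    IsGreatest {x : ℝ | ∃ A : Matrix (Fin 3) (Fin 3) ℝ,
        ColStoch A ∧ x = (U * (A * C) * Pi).trace} (1/2) ∧
    IsGreatest {x : ℝ | ∃ A : Matrix (Fin 3) (Fin 3) ℝ,
        ColStoch A ∧ x = (U * (A * Cbar) * Pi).trace} (2/3) := by
  intro C Cbar Pi U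
  have hC := isGreatest_expectedUtility U C (c := 3⁻¹) (by norm_num) ![1, 0, 0] (by
    intro k j; fin_cases k <;> fin_cases j <;> norm_num [C, U, mul_fin_three])
  have hCbar := isGreatest_expectedUtility U Cbar (c := 3⁻¹) (by norm_num) ![0, 1, 1] (by
    intro k j; fin_cases k <;> fin_cases j <;> norm_num [Cbar, U, mul_fin_three])
  refine ⟨⟨1, decisionMatrix ![2, 1, 0], colStoch_one, colStoch_decisionMatrix _, ?_⟩, ?_, ?_⟩
  · ext i k
    rw [one_mul, mul_decisionMatrix_apply]
    fin_cases i <;> fin_cases k <;> rfl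
  · convert hC using 1
    simp [Fin.sum_univ_three, C, U]
    norm_num
  · convert hCbar using 1
    simp [Fin.sum_univ_three, Cbar, U]
    norm_num
end

section
/- There is no subset 𝒰 ⊆ ℝ^{2×2} of utility matrices such that for all 2×2 channels C, C̄ with uniform input distribution Π = (1/2)·I: (C̄ is a Shannon-garbling of C) if and only if (for all U ∈ 𝒰, max over D in Φ(C) of tr(U·D·Π) ≥ max over D in Φ(C̄) of tr(U·D·Π)). -/
open Matrix BigOperators

/-!
For any set of utilities and any prior, the channels dominated by a fixed channel `C` in the
utility order form a convex set: the expected utility is linear in the garbled channel, so a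
mixture of two dominated channels is beaten by whichever decision rule serves the better of the
two. Shannon-garblings of the Z-channel `Z = !![1, 1/2; 0, 1/2]` are not convex. Relabelling
inputs and outputs gives the garbling `Z'` of `Z`, but the binary symmetric channel
`(Z + Z') / 2` is not a garbling of `Z`: its determinant equals `det Z`, which forces both garbling
matrices to have `|det| = 1`, i.e. to be permutations, and no permutation of `Z` has an entry `3/4`.
-/

def IsGarbling {m n : ℕ} (C Cbar : Matrix (Fin m) (Fin n) ℝ) : Prop :=
  ∃ (M : Matrix (Fin m) (Fin m) ℝ) (N : Matrix (Fin n) (Fin n) ℝ), ColStoch M ∧ ColStoch N ∧ Cbar = M * C * N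

def UtilityDominates {a m n : ℕ} (𝒰 : Set (Matrix (Fin n) (Fin a) ℝ))
    (Pi : Matrix (Fin n) (Fin n) ℝ) (C Cbar : Matrix (Fin m) (Fin n) ℝ) : Prop :=
  ∀ U ∈ 𝒰, ∀ Abar : Matrix (Fin a) (Fin m) ℝ, ColStoch Abar →
    ∃ A : Matrix (Fin a) (Fin m) ℝ, ColStoch A ∧
      (U * (A * C) * Pi).trace ≥ (U * (Abar * Cbar) * Pi).trace

namespace UtilityDominates

variable {a m n : ℕ} {𝒰 : Set (Matrix (Fin n) (Fin a) ℝ)} {Pi : Matrix (Fin n) (Fin n) ℝ}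

theorem refl (C : Matrix (Fin m) (Fin n) ℝ) : UtilityDominates 𝒰 Pi C C :=
  fun _ _ Abar hAbar => ⟨Abar, hAbar, le_rfl⟩

theorem convex (C : Matrix (Fin m) (Fin n) ℝ) :
    Convex ℝ {Cbar | UtilityDominates 𝒰 Pi C Cbar} := by
  intro X hX Y hY s t hs ht hst U hU Abar hAbar
  obtain ⟨A₁, hA₁, h₁⟩ := hX U hU Abar hAbar
  obtain ⟨A₂, hA₂, h₂⟩ := hY U hU Abar hAbar
  have hmix : (U * (Abar * (s • X + t • Y)) * Pi).trace =
      s * (U * (Abar * X) * Pi).trace + t * (U * (Abar * Y) * Pi).trace := by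
    simp only [Matrix.mul_add, Matrix.add_mul, Matrix.mul_smul, Matrix.smul_mul, trace_add,
      trace_smul, smul_eq_mul]
  have hle : (U * (Abar * (s • X + t • Y)) * Pi).trace ≤
      max (U * (A₁ * C) * Pi).trace (U * (A₂ * C) * Pi).trace :=
    hmix ▸ (Convex.combo_le_max _ _ hs ht hst).trans (max_le_max h₁ h₂)
  rcases max_choice (U * (A₁ * C) * Pi).trace (U * (A₂ * C) * Pi).trace with h | h
  · exact ⟨A₁, hA₁, h ▸ hle⟩
  · exact ⟨A₂, hA₂, h ▸ hle⟩

end UtilityDominates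

theorem colStoch_fin_two_iff {A : Matrix (Fin 2) (Fin 2) ℝ} :
    ColStoch A ↔ (∀ i j, 0 ≤ A i j) ∧ A 0 0 + A 1 0 = 1 ∧ A 0 1 + A 1 1 = 1 := by
  simp only [ColStoch, Fin.sum_univ_two, Fin.forall_fin_two]

namespace ColStoch

theorem le_one {m n : ℕ} {A : Matrix (Fin m) (Fin n) ℝ} (hA : ColStoch A) (i : Fin m)
    (j : Fin n) : A i j ≤ 1 :=
  hA.2 j ▸ Finset.single_le_sum (fun k _ => hA.1 k j) (Finset.mem_univ i)

variable {A : Matrix (Fin 2) (Fin 2) ℝ}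

theorem det_eq_sub (hA : ColStoch A) : A.det = A 0 0 - A 0 1 := by
  have h₀ := hA.2 0
  have h₁ := hA.2 1
  rw [Fin.sum_univ_two] at h₀ h₁
  rw [det_fin_two]
  linear_combination A 0 0 * h₁ - A 0 1 * h₀

theorem abs_det_le_one (hA : ColStoch A) : |A.det| ≤ 1 := by
  rw [hA.det_eq_sub, abs_sub_le_iff]
  constructor <;> linarith [hA.1 0 0, hA.1 0 1, hA.le_one 0 0, hA.le_one 0 1]

theorem eq_one_or_eq_swap_of_abs_det_eq_one (hA : ColStoch A) (h : |A.det| = 1) :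
    A = 1 ∨ A = !![0, 1; 1, 0] := by
  have h₀ := hA.2 0
  have h₁ := hA.2 1
  rw [Fin.sum_univ_two] at h₀ h₁
  have := hA.1 0 0; have := hA.1 0 1; have := hA.le_one 0 0; have := hA.le_one 0 1
  rw [hA.det_eq_sub] at h
  rcases abs_eq zero_le_one |>.mp h with h | h
  · left; ext i j; fin_cases i <;> fin_cases j <;> simp <;> linarith
  · right; ext i j; fin_cases i <;> fin_cases j <;> simp <;> linarith

end ColStoch

theorem not_isGarbling_zChannel_bsc :
    ¬ IsGarbling !![1, 1/2; 0, 1/2] (!![3/4, 1/4; 1/4, 3/4] : Matrix (Fin 2) (Fin 2) ℝ) := by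
  rintro ⟨M, N, hM, hN, hEq⟩
  have hdet : M.det * N.det = 1 := by
    have := congrArg det hEq
    simp only [det_mul, det_fin_two_of] at this
    linarith
  have habs : |M.det| * |N.det| = 1 := by rw [← abs_mul, hdet, abs_one]
  have hM1 : |M.det| = 1 := le_antisymm hM.abs_det_le_one
    (habs ▸ mul_le_of_le_one_right (abs_nonneg _) hN.abs_det_le_one)
  have hN1 : |N.det| = 1 := le_antisymm hN.abs_det_le_one
    (habs ▸ mul_le_of_le_one_left (abs_nonneg _) hM.abs_det_le_one)
  have h00 := congrFun₂ hEq 0 0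
  rcases hM.eq_one_or_eq_swap_of_abs_det_eq_one hM1 with rfl | rfl <;>
    rcases hN.eq_one_or_eq_swap_of_abs_det_eq_one hN1 with rfl | rfl <;>
    norm_num [Matrix.mul_apply, Fin.sum_univ_two] at h00

/-- No set of 2×2 utility matrices makes reduced Blackwell-usefulness
equivalent to the Shannon-order. -/
theorem no_utility_set_2x2 :
    let Pi : Matrix (Fin 2) (Fin 2) ℝ := !![1/2, 0; 0, 1/2]
    ¬ ∃ 𝒰 : Set (Matrix (Fin 2) (Fin 2) ℝ),
      ∀ C Cbar : Matrix (Fin 2) (Fin 2) ℝ, ColStoch C → ColStoch Cbar →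
        ((∃ M N : Matrix (Fin 2) (Fin 2) ℝ, ColStoch M ∧ ColStoch N ∧ Cbar = M * C * N)
          ↔
         (∀ U ∈ 𝒰, ∀ Abar : Matrix (Fin 2) (Fin 2) ℝ, ColStoch Abar →
            ∃ A : Matrix (Fin 2) (Fin 2) ℝ, ColStoch A ∧
              (U * (A * C) * Pi).trace ≥ (U * (Abar * Cbar) * Pi).trace)) := by
  intro Pi
  rintro ⟨𝒰, h⟩
  set Z : Matrix (Fin 2) (Fin 2) ℝ := !![1, 1/2; 0, 1/2]
  set Z' : Matrix (Fin 2) (Fin 2) ℝ := !![1/2, 0; 1/2, 1]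
  set S : Matrix (Fin 2) (Fin 2) ℝ := !![0, 1; 1, 0]
  have hZ : ColStoch Z := by norm_num [Z, colStoch_fin_two_iff, Fin.forall_fin_two]
  have hZ' : ColStoch Z' := by norm_num [Z', colStoch_fin_two_iff, Fin.forall_fin_two]
  have hS : ColStoch S := by norm_num [S, colStoch_fin_two_iff, Fin.forall_fin_two]
  have hBSC : ColStoch (!![3/4, 1/4; 1/4, 3/4] : Matrix (Fin 2) (Fin 2) ℝ) := by
    norm_num [colStoch_fin_two_iff, Fin.forall_fin_two]
  have hZZ' : UtilityDominates 𝒰 Pi Z Z' := (h Z Z' hZ hZ').mp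
    ⟨S, S, hS, hS, by ext i j; fin_cases i <;> fin_cases j <;> norm_num [Z, Z', S, mul_apply]⟩
  have hmid : (1/2 : ℝ) • Z + (1/2 : ℝ) • Z' = !![3/4, 1/4; 1/4, 3/4] := by
    ext i j; fin_cases i <;> fin_cases j <;> norm_num [Z, Z']
  have hZBSC : UtilityDominates 𝒰 Pi Z !![3/4, 1/4; 1/4, 3/4] :=
    hmid ▸ UtilityDominates.convex Z (UtilityDominates.refl Z) hZZ' (by norm_num) (by norm_num)
      (by norm_num)
  exact not_isGarbling_zChannel_bsc ((h Z _ hZ hBSC).mpr hZBSC)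
end
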